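/- arXiv:2409.09320 — 5 statements merged into one kernel-verified Lean document; each statement's English description precedes it below -/
import Mathlib

section
/- Let F be a field of characteristic different from 2, V a finite-dimensional F-vector space, and Q a nondegenerate quadratic form on V. If v, e ∈ V satisfy Q(v) = Q(e) and Q(e) ≠ 0, then there exists a linear automorphism f of V which is an isometry of Q (i.e. Q(f(x)) = Q(x) for all x ∈ V) such that f(e) = v. Equivalently (Witt's theorem), the orthogonal group O(V,Q) acts transitively on each level set Y = {v ∈ V : Q(v) = c} with c ≠ 0. -/
/-! The reflection in an anisotropic vector `w`, `x ↦ x - (polar Q w x / Q w) • w`, is an isometry.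
If `Q v = Q e`, the reflection in `v - e` sends `e` to `v` and the reflection in `v + e` sends `e`
to `-v`. By the parallelogram law `Q (v - e) + Q (v + e) = 4 Q e ≠ 0`, so one of the two vectors is
anisotropic, and either that reflection or its negative is the required isometry. -/

namespace QuadraticMap

section CommRing

variable {R M N : Type*} [CommRing R] [AddCommGroup M] [Module R M] [AddCommGroup N] [Module R N]

theorem map_sub_add_map_add (Q : QuadraticMap R M N) (x y : M) :
    Q (x - y) + Q (x + y) = (2 : ℕ) • (Q x + Q y) := by
  have hsub := QuadraticMap.map_add Q x (-y)
  rw [polar_neg_right, QuadraticMap.map_neg, ← sub_eq_add_neg] at hsub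
  rw [hsub, QuadraticMap.map_add Q x y, two_nsmul]
  abel

end CommRing

variable {F V : Type*} [Field F] [AddCommGroup V] [Module F V] (Q : QuadraticForm F V) {w : V}

theorem polarBilin_div_self_eq_two (hw : Q w ≠ 0) : ((Q w)⁻¹ • Q.polarBilin w) w = 2 := by
  rw [LinearMap.smul_apply, polarBilin_apply_apply, polar_self, two_nsmul, smul_eq_mul]
  field_simp
  ring

noncomputable def reflection (hw : Q w ≠ 0) : V ≃ₗ[F] V :=
  Module.reflection (Q.polarBilin_div_self_eq_two hw)

theorem reflection_apply (hw : Q w ≠ 0) (x : V) :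
    Q.reflection hw x = x - (polar Q w x / Q w) • w := by
  rw [reflection, Module.reflection_apply, LinearMap.smul_apply, polarBilin_apply_apply,
    smul_eq_mul, inv_mul_eq_div]

theorem map_reflection (hw : Q w ≠ 0) (x : V) : Q (Q.reflection hw x) = Q x := by
  rw [reflection_apply, sub_eq_add_neg, QuadraticMap.map_add Q, QuadraticMap.map_neg,
    QuadraticMap.map_smul, polar_neg_right, polar_smul_right, polar_comm Q x w, smul_eq_mul,
    smul_eq_mul]
  field_simp
  ring

variable {v e : V}

theorem reflection_sub_apply_of_eq (hve : Q v = Q e) (h : Q (v - e) ≠ 0) :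
    Q.reflection h e = v := by
  have hpolar : polar Q (v - e) e = -Q (v - e) := by
    have := QuadraticMap.map_add Q (v - e) e
    rw [sub_add_cancel, hve] at this
    linear_combination -this
  rw [reflection_apply, hpolar, neg_div, div_self h, neg_smul, one_smul, sub_neg_eq_add,
    add_sub_cancel]

theorem reflection_add_apply_of_eq (hve : Q v = Q e) (h : Q (v + e) ≠ 0) :
    Q.reflection h e = -v := by
  have hpolar : polar Q (v + e) e = Q (v + e) := by
    have := QuadraticMap.map_add Q (v + e) (-e)
    rw [add_neg_cancel_right, QuadraticMap.map_neg, polar_neg_right, hve] at this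
    linear_combination this
  rw [reflection_apply, hpolar, div_self h, one_smul, sub_add_cancel_right]

end QuadraticMap

open QuadraticMap

theorem witt_transitive_on_level_sets_general
    {F V : Type*} [Field F] [AddCommGroup V] [Module F V]
    (hchar : (2 : F) ≠ 0)
    (Q : QuadraticForm F V)
    (v e : V) (hve : Q v = Q e) (he : Q e ≠ 0) :
    ∃ f : V ≃ₗ[F] V, (∀ x : V, Q (f x) = Q x) ∧ f e = v := by
  by_cases hsub : Q (v - e) = 0
  · have hadd : Q (v + e) ≠ 0 := by
      have := Q.map_sub_add_map_add v e
      rw [hsub, zero_add, hve, two_nsmul, ← two_mul, ← two_mul] at this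
      rw [this]
      exact mul_ne_zero hchar (mul_ne_zero hchar he)
    refine ⟨(Q.reflection hadd).trans (LinearEquiv.neg F), fun x => ?_, ?_⟩
    · simp [map_reflection]
    · simp [reflection_add_apply_of_eq Q hve hadd]
  · exact ⟨Q.reflection hsub, Q.map_reflection hsub, Q.reflection_sub_apply_of_eq hve hsub⟩

/-- **Witt's theorem** (transitivity on nonzero level sets).
Let `F` be a field of characteristic different from 2, `V` a finite-dimensional `F`-vector
space, and `Q` a nondegenerate quadratic form on `V`. If `v, e ∈ V` satisfy `Q v = Q e` and
`Q e ≠ 0`, then there exists a linear automorphism `f` of `V` which is an isometry of `Q`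
(i.e. `Q (f x) = Q x` for all `x`) such that `f e = v`. -/
theorem witt_transitive_on_level_sets
    {F V : Type*} [Field F] [AddCommGroup V] [Module F V] [FiniteDimensional F V]
    (hchar : (2 : F) ≠ 0)
    (Q : QuadraticForm F V) (hQ : Q.polarBilin.Nondegenerate)
    (v e : V) (hve : Q v = Q e) (he : Q e ≠ 0) :
    ∃ f : V ≃ₗ[F] V, (∀ x : V, Q (f x) = Q x) ∧ f e = v :=
  witt_transitive_on_level_sets_general hchar Q v e hve he
end

section
/- Let F be a field of characteristic zero, V an F-vector space with quadratic form Q, e ∈ V, and g a unit of the Clifford algebra C(V). If α(g)·ι(e)·g⁻¹ = ι(e), then α(reverse(g))·ι(e)·reverse(g)⁻¹ = ι(e). That is, if g stabilizes e under the twisted conjugation action, then so does its image g* under the canonical involution. -/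
open CliffordAlgebra

/-- Let `F` be a field of characteristic zero, `V` an `F`-vector space with quadratic form
`Q`, `e ∈ V`, and `g` a unit of the Clifford algebra `C(V)`. If `α(g)·ι(e)·g⁻¹ = ι(e)`,
then `α(reverse g)·ι(e)·(reverse g)⁻¹ = ι(e)` (where `(reverse g)⁻¹ = reverse g⁻¹`).
That is, if `g` stabilizes `e` under twisted conjugation, so does `g*`. -/
theorem reverse_stabilizes_of_stabilizes
    {F V : Type*} [Field F] [CharZero F] [AddCommGroup V] [Module F V]
    (Q : QuadraticForm F V) (e : V) (g : (CliffordAlgebra Q)ˣ)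
    (hg : involute (g : CliffordAlgebra Q) * ι Q e *
        ((g⁻¹ : (CliffordAlgebra Q)ˣ) : CliffordAlgebra Q) = ι Q e) :
    involute (reverse (Q := Q) (g : CliffordAlgebra Q)) * ι Q e *
        reverse ((g⁻¹ : (CliffordAlgebra Q)ˣ) : CliffordAlgebra Q) = ι Q e := by
  have h1 : involute (g : CliffordAlgebra Q) * ι Q e = ι Q e * (g : CliffordAlgebra Q) := by
    have := congrArg (· * (g : CliffordAlgebra Q)) hg
    simpa [mul_assoc] using this
  have h2 := congrArg (fun x => involute (reverse (Q := Q) x)) h1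
  simp only [reverse.map_mul, map_mul, reverse_involute, involute_involute, reverse_ι,
    involute_ι, mul_neg, neg_mul, neg_inj] at h2
  have h3 : involute (reverse (Q := Q) (g : CliffordAlgebra Q)) * ι Q e
      = ι Q e * reverse (Q := Q) (g : CliffordAlgebra Q) := h2.symm
  rw [h3, mul_assoc, ← reverse.map_mul, Units.inv_mul]
  simp
end

section
/- Let F be a field of characteristic zero, V a finite-dimensional F-vector space with quadratic form Q, and e ∈ V with Q(e) ≠ 0, so that ι(e) is a unit of C(V) with ι(e)² = Q(e)·1. Suppose g is a unit of C(V) satisfying α(g)·ι(V)·g⁻¹ = ι(V) and α(g)·ι(e)·g⁻¹ = ι(e) (i.e. g lies in GPin(V) and stabilizes e, so g ∈ GPin(V)_e = GPin(W) where W = e^⊥). Then h := ι(e)·reverse(g)·ι(e)⁻¹ is a unit of C(V) satisfying the same two conditions: α(h)·ι(V)·h⁻¹ = ι(V) and α(h)·ι(e)·h⁻¹ = ι(e). Consequently the involution τ_W(g) = e·σ_V(g)·e⁻¹ maps GPin(V)_e = GPin(W) into itself. -/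
open CliffordAlgebra

/-- Let `F` be a field of characteristic zero, `V` a finite-dimensional `F`-vector space with
quadratic form `Q`, and `e ∈ V` with `Q e ≠ 0`, so that `ι e` is a unit of `C(V)` with
`ι(e)² = Q(e)·1` and inverse `(Q e)⁻¹ • ι e`. Suppose the unit `g` of `C(V)` satisfies
`α(g)·ι(V)·g⁻¹ = ι(V)` and `α(g)·ι(e)·g⁻¹ = ι(e)` (i.e. `g ∈ GPin(V)_e = GPin(W)`).
Then `h := ι(e)·reverse(g)·ι(e)⁻¹` is a unit of `C(V)` (with inverse
`ι(e)·reverse(g⁻¹)·ι(e)⁻¹`) satisfying the same two conditions: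
`α(h)·ι(V)·h⁻¹ = ι(V)` and `α(h)·ι(e)·h⁻¹ = ι(e)`.
Consequently the involution `τ_W(g) = e·σ_V(g)·e⁻¹` maps `GPin(V)_e = GPin(W)` into
itself. -/
theorem tau_W_preserves_GPin_W
    {F V : Type*} [Field F] [CharZero F] [AddCommGroup V] [Module F V]
    [FiniteDimensional F V] (Q : QuadraticForm F V)
    (e : V) (he : Q e ≠ 0) (g : (CliffordAlgebra Q)ˣ)
    (hg1 : (fun x => involute (g : CliffordAlgebra Q) * x *
        ((g⁻¹ : (CliffordAlgebra Q)ˣ) : CliffordAlgebra Q)) '' Set.range (ι Q) =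
        Set.range (ι Q))
    (hg2 : involute (g : CliffordAlgebra Q) * ι Q e *
        ((g⁻¹ : (CliffordAlgebra Q)ˣ) : CliffordAlgebra Q) = ι Q e) :
    ι Q e * ((Q e)⁻¹ • ι Q e) = 1 ∧
    (ι Q e * reverse (Q := Q) (g : CliffordAlgebra Q) * ((Q e)⁻¹ • ι Q e)) *
        (ι Q e * reverse ((g⁻¹ : (CliffordAlgebra Q)ˣ) : CliffordAlgebra Q) *
          ((Q e)⁻¹ • ι Q e)) = 1 ∧
    (ι Q e * reverse ((g⁻¹ : (CliffordAlgebra Q)ˣ) : CliffordAlgebra Q) *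
          ((Q e)⁻¹ • ι Q e)) *
        (ι Q e * reverse (Q := Q) (g : CliffordAlgebra Q) * ((Q e)⁻¹ • ι Q e)) = 1 ∧
    (fun x => involute (ι Q e * reverse (Q := Q) (g : CliffordAlgebra Q) *
          ((Q e)⁻¹ • ι Q e)) * x *
        (ι Q e * reverse ((g⁻¹ : (CliffordAlgebra Q)ˣ) : CliffordAlgebra Q) *
          ((Q e)⁻¹ • ι Q e))) '' Set.range (ι Q) = Set.range (ι Q) ∧
    involute (ι Q e * reverse (Q := Q) (g : CliffordAlgebra Q) * ((Q e)⁻¹ • ι Q e)) *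
        ι Q e *
        (ι Q e * reverse ((g⁻¹ : (CliffordAlgebra Q)ˣ) : CliffordAlgebra Q) *
          ((Q e)⁻¹ • ι Q e)) = ι Q e := by
  classical
  set u : CliffordAlgebra Q := ι Q e with hu
  set u' : CliffordAlgebra Q := (Q e)⁻¹ • ι Q e with hu'
  -- basic unit facts about u and u'
  have huu' : u * u' = 1 := by
    rw [hu, hu', mul_smul_comm, ι_sq_scalar, Algebra.smul_def, ← map_mul,
      inv_mul_cancel₀ he, map_one]
  have hu'u : u' * u = 1 := by
    rw [hu, hu', smul_mul_assoc, ι_sq_scalar, Algebra.smul_def, ← map_mul,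
      inv_mul_cancel₀ he, map_one]
  -- reverse/involute of units
  have hrev1 : reverse (Q := Q) (g : CliffordAlgebra Q) *
      reverse ((g⁻¹ : (CliffordAlgebra Q)ˣ) : CliffordAlgebra Q) = 1 := by
    rw [← reverse.map_mul, Units.inv_mul, reverse.map_one]
  have hrev2 : reverse ((g⁻¹ : (CliffordAlgebra Q)ˣ) : CliffordAlgebra Q) *
      reverse (Q := Q) (g : CliffordAlgebra Q) = 1 := by
    rw [← reverse.map_mul, Units.mul_inv, reverse.map_one]
  have hrevinv1 : reverse (Q := Q) (involute (g : CliffordAlgebra Q)) *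
      reverse (involute ((g⁻¹ : (CliffordAlgebra Q)ˣ) : CliffordAlgebra Q)) = 1 := by
    rw [← reverse.map_mul, ← map_mul, Units.inv_mul, map_one, reverse.map_one]
  -- involute of h
  have hinvh : involute (u * reverse (Q := Q) (g : CliffordAlgebra Q) * u')
      = u * reverse (Q := Q) (involute (g : CliffordAlgebra Q)) * u' := by
    rw [map_mul, map_mul, hu, hu', involute_ι, map_smul, involute_ι, ← reverse_involute]
    simp only [neg_mul, mul_neg, smul_neg, neg_neg]
  -- key algebraic identity from hg2
  have hA : (g : CliffordAlgebra Q) * ι Q e *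
      involute ((g⁻¹ : (CliffordAlgebra Q)ˣ) : CliffordAlgebra Q) = ι Q e := by
    have h := congrArg (involute (Q := Q)) hg2
    rw [map_mul, map_mul, involute_involute, involute_ι] at h
    rw [← neg_inj]
    rw [← h]
    noncomm_ring
  have hB : reverse (Q := Q) (involute ((g⁻¹ : (CliffordAlgebra Q)ˣ) : CliffordAlgebra Q)) *
      ι Q e * reverse (Q := Q) (g : CliffordAlgebra Q) = ι Q e := by
    have h := congrArg (reverse (Q := Q)) hA
    rw [reverse.map_mul, reverse.map_mul, reverse_ι] at h
    rw [mul_assoc]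
    exact h
  have key2 : reverse (Q := Q) (involute (g : CliffordAlgebra Q)) * ι Q e *
      reverse ((g⁻¹ : (CliffordAlgebra Q)ˣ) : CliffordAlgebra Q) = ι Q e := by
    calc reverse (Q := Q) (involute (g : CliffordAlgebra Q)) * ι Q e *
        reverse ((g⁻¹ : (CliffordAlgebra Q)ˣ) : CliffordAlgebra Q)
        = reverse (Q := Q) (involute (g : CliffordAlgebra Q)) *
          (reverse (Q := Q) (involute ((g⁻¹ : (CliffordAlgebra Q)ˣ) : CliffordAlgebra Q)) *
            ι Q e * reverse (Q := Q) (g : CliffordAlgebra Q)) *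
          reverse ((g⁻¹ : (CliffordAlgebra Q)ˣ) : CliffordAlgebra Q) := by rw [hB]
      _ = (reverse (Q := Q) (involute (g : CliffordAlgebra Q)) *
            reverse (Q := Q) (involute ((g⁻¹ : (CliffordAlgebra Q)ˣ) : CliffordAlgebra Q))) *
          ι Q e *
          (reverse (Q := Q) (g : CliffordAlgebra Q) *
            reverse ((g⁻¹ : (CliffordAlgebra Q)ˣ) : CliffordAlgebra Q)) := by noncomm_ring
      _ = ι Q e := by rw [hrevinv1, hrev1, one_mul, mul_one]
  -- core computation: conjugating a vector by ι e stays a vector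
  have core : ∀ v : V, ι Q e * ι Q v * ι Q e
      = QuadraticMap.polar Q e v • ι Q e - Q e • ι Q v := by
    intro v
    rw [ι_mul_ι_comm, sub_mul, mul_assoc, ι_sq_scalar, Algebra.smul_def, Algebra.smul_def,
      ← Algebra.commutes]
  -- the three conjugation maps
  set fA : CliffordAlgebra Q → CliffordAlgebra Q := fun x => u * x * u' with hfA
  set fA' : CliffordAlgebra Q → CliffordAlgebra Q := fun x => u' * x * u with hfA'
  set fB : CliffordAlgebra Q → CliffordAlgebra Q := fun x =>
    reverse (Q := Q) (involute (g : CliffordAlgebra Q)) * x *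
      reverse ((g⁻¹ : (CliffordAlgebra Q)ˣ) : CliffordAlgebra Q) with hfB
  have compA : ∀ v : V, fA (ι Q v) =
      ι Q (((Q e)⁻¹ * QuadraticMap.polar Q e v) • e - v) := by
    intro v
    rw [hfA]
    show u * ι Q v * u' = _
    rw [hu, hu', mul_smul_comm]
    rw [core v, smul_sub, smul_smul, smul_smul, inv_mul_cancel₀ he, one_smul,
      map_sub, map_smul]
  have compA' : ∀ v : V, fA' (ι Q v) =
      ι Q (((Q e)⁻¹ * QuadraticMap.polar Q e v) • e - v) := by
    intro v
    rw [hfA']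
    show u' * ι Q v * u = _
    rw [hu, hu', smul_mul_assoc, smul_mul_assoc]
    rw [core v, smul_sub, smul_smul, smul_smul, inv_mul_cancel₀ he, one_smul,
      map_sub, map_smul]
  have hAA' : ∀ x, fA (fA' x) = x := by
    intro x
    show u * (u' * x * u) * u' = x
    calc u * (u' * x * u) * u' = (u * u') * x * (u * u') := by noncomm_ring
      _ = x := by rw [huu', one_mul, mul_one]
  have hA'A : ∀ x, fA' (fA x) = x := by
    intro x
    show u' * (u * x * u') * u = x
    calc u' * (u * x * u') * u = (u' * u) * x * (u' * u) := by noncomm_ring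
      _ = x := by rw [hu'u, one_mul, mul_one]
  have hAS : fA '' Set.range (ι Q) = Set.range (ι Q) := by
    apply Set.Subset.antisymm
    · rintro _ ⟨_, ⟨v, rfl⟩, rfl⟩
      exact ⟨_, (compA v).symm⟩
    · rintro _ ⟨v, rfl⟩
      exact ⟨fA' (ι Q v), ⟨_, (compA' v).symm⟩, hAA' _⟩
  have hA'S : fA' '' Set.range (ι Q) = Set.range (ι Q) := by
    apply Set.Subset.antisymm
    · rintro _ ⟨_, ⟨v, rfl⟩, rfl⟩
      exact ⟨_, (compA' v).symm⟩
    · rintro _ ⟨v, rfl⟩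
      exact ⟨fA (ι Q v), ⟨_, (compA v).symm⟩, hA'A _⟩
  -- the inverse of the map in hg1 also preserves the range of ι
  set fG : CliffordAlgebra Q → CliffordAlgebra Q := fun x =>
    involute (g : CliffordAlgebra Q) * x *
      ((g⁻¹ : (CliffordAlgebra Q)ˣ) : CliffordAlgebra Q) with hfG
  set fG' : CliffordAlgebra Q → CliffordAlgebra Q := fun x =>
    involute ((g⁻¹ : (CliffordAlgebra Q)ˣ) : CliffordAlgebra Q) * x *
      ((g : CliffordAlgebra Q)) with hfG'
  have hG'G : ∀ x, fG' (fG x) = x := by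
    intro x
    show involute ((g⁻¹ : (CliffordAlgebra Q)ˣ) : CliffordAlgebra Q) *
      (involute (g : CliffordAlgebra Q) * x *
        ((g⁻¹ : (CliffordAlgebra Q)ˣ) : CliffordAlgebra Q)) * (g : CliffordAlgebra Q) = x
    calc involute ((g⁻¹ : (CliffordAlgebra Q)ˣ) : CliffordAlgebra Q) *
        (involute (g : CliffordAlgebra Q) * x *
          ((g⁻¹ : (CliffordAlgebra Q)ˣ) : CliffordAlgebra Q)) * (g : CliffordAlgebra Q)
        = (involute ((g⁻¹ : (CliffordAlgebra Q)ˣ) : CliffordAlgebra Q) *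
            involute (g : CliffordAlgebra Q)) * x *
          (((g⁻¹ : (CliffordAlgebra Q)ˣ) : CliffordAlgebra Q) * (g : CliffordAlgebra Q)) := by
          noncomm_ring
      _ = x := by rw [← map_mul, Units.inv_mul, map_one, one_mul, mul_one]
  have hG'S : fG' '' Set.range (ι Q) = Set.range (ι Q) := by
    conv_lhs => rw [← hg1]
    rw [show ((fun x => involute (g : CliffordAlgebra Q) * x *
        ((g⁻¹ : (CliffordAlgebra Q)ˣ) : CliffordAlgebra Q)) '' Set.range (ι Q)) =
        fG '' Set.range (ι Q) from rfl, ← Set.image_comp]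
    have : fG' ∘ fG = id := funext hG'G
    rw [this, Set.image_id]
  -- involute and reverse preserve the range of ι
  have hinvS : involute (Q := Q) '' Set.range (ι Q) = Set.range (ι Q) := by
    apply Set.Subset.antisymm
    · rintro _ ⟨_, ⟨v, rfl⟩, rfl⟩
      exact ⟨-v, by rw [involute_ι, map_neg]⟩
    · rintro _ ⟨v, rfl⟩
      exact ⟨ι Q (-v), ⟨-v, rfl⟩, by rw [involute_ι, map_neg, neg_neg]⟩
  have hrevS : reverse (Q := Q) '' Set.range (ι Q) = Set.range (ι Q) := by
    apply Set.Subset.antisymm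
    · rintro _ ⟨_, ⟨v, rfl⟩, rfl⟩
      exact ⟨v, (reverse_ι v).symm⟩
    · rintro _ ⟨v, rfl⟩
      exact ⟨ι Q v, ⟨v, rfl⟩, reverse_ι v⟩
  -- fB preserves the range of ι
  have hBfun : fB = (reverse (Q := Q)) ∘ (involute (Q := Q)) ∘ fG' ∘
      (involute (Q := Q)) ∘ (reverse (Q := Q)) := by
    funext x
    show reverse (Q := Q) (involute (g : CliffordAlgebra Q)) * x *
        reverse ((g⁻¹ : (CliffordAlgebra Q)ˣ) : CliffordAlgebra Q) =
      reverse (involute (involute ((g⁻¹ : (CliffordAlgebra Q)ˣ) : CliffordAlgebra Q) *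
        involute (reverse x) * (g : CliffordAlgebra Q)))
    simp only [map_mul, involute_involute, reverse.map_mul, reverse_reverse, mul_assoc]
  have hBS : fB '' Set.range (ι Q) = Set.range (ι Q) := by
    rw [hBfun, Set.image_comp, Set.image_comp, Set.image_comp, Set.image_comp,
      hrevS, hinvS, hG'S, hinvS, hrevS]
  -- right-associated cancellation helpers
  have hc2 : ∀ x : CliffordAlgebra Q, u' * (u * x) = x := fun x => by
    rw [← mul_assoc, hu'u, one_mul]
  refine ⟨huu', ?_, ?_, ?_, ?_⟩
  · calc (u * reverse (Q := Q) (g : CliffordAlgebra Q) * u') *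
        (u * reverse ((g⁻¹ : (CliffordAlgebra Q)ˣ) : CliffordAlgebra Q) * u')
        = u * (reverse (Q := Q) (g : CliffordAlgebra Q) * (u' * u) *
            reverse ((g⁻¹ : (CliffordAlgebra Q)ˣ) : CliffordAlgebra Q)) * u' := by noncomm_ring
      _ = 1 := by rw [hu'u, mul_one, hrev1, mul_one, huu']
  · calc (u * reverse ((g⁻¹ : (CliffordAlgebra Q)ˣ) : CliffordAlgebra Q) * u') *
        (u * reverse (Q := Q) (g : CliffordAlgebra Q) * u')
        = u * (reverse ((g⁻¹ : (CliffordAlgebra Q)ˣ) : CliffordAlgebra Q) * (u' * u) *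
            reverse (Q := Q) (g : CliffordAlgebra Q)) * u' := by noncomm_ring
      _ = 1 := by rw [hu'u, mul_one, hrev2, mul_one, huu']
  · -- main image condition
    have hfun : (fun x => involute (u * reverse (Q := Q) (g : CliffordAlgebra Q) * u') * x *
        (u * reverse ((g⁻¹ : (CliffordAlgebra Q)ˣ) : CliffordAlgebra Q) * u')) =
        fA ∘ fB ∘ fA' := by
      funext x
      show involute (u * reverse (Q := Q) (g : CliffordAlgebra Q) * u') * x *
          (u * reverse ((g⁻¹ : (CliffordAlgebra Q)ˣ) : CliffordAlgebra Q) * u') =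
        u * (reverse (Q := Q) (involute (g : CliffordAlgebra Q)) * (u' * x * u) *
          reverse ((g⁻¹ : (CliffordAlgebra Q)ˣ) : CliffordAlgebra Q)) * u'
      rw [hinvh]
      noncomm_ring
    rw [hfun, Set.image_comp, Set.image_comp, hA'S, hBS, hAS]
  · -- the stabilizer condition for h
    rw [hinvh]
    calc (u * reverse (Q := Q) (involute (g : CliffordAlgebra Q)) * u') * ι Q e *
        (u * reverse ((g⁻¹ : (CliffordAlgebra Q)ˣ) : CliffordAlgebra Q) * u')
        = u * ((reverse (Q := Q) (involute (g : CliffordAlgebra Q)) *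
            (u' * (ι Q e * u))) * reverse ((g⁻¹ : (CliffordAlgebra Q)ˣ) : CliffordAlgebra Q))
            * u' := by noncomm_ring
      _ = u * (reverse (Q := Q) (involute (g : CliffordAlgebra Q)) * ι Q e *
            reverse ((g⁻¹ : (CliffordAlgebra Q)ˣ) : CliffordAlgebra Q)) * u' := by
          rw [show ι Q e * u = u * ι Q e from rfl, hc2 (ι Q e)]
      _ = u * ι Q e * u' := by rw [key2]
      _ = ι Q e := by
          have huu'2 : ι Q e * u' = 1 := huu'
          rw [mul_assoc, huu'2, mul_one]
end

section
/- Let F be a field of characteristic zero, V a finite-dimensional F-vector space, and Q a nondegenerate quadratic form on V. If g is a unit of the Clifford algebra C(V) satisfying α(g)·ι(v)·g⁻¹ = ι(v) for all v ∈ V, then g is a nonzero scalar: there exists λ ∈ F, λ ≠ 0, with g = λ·1 in C(V). (Equivalently, the kernel of the canonical projection P : GPin(V) → O(V), P(g)(v) = α(g)·v·g⁻¹, is GL(1) = F^×.) -/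
/-!
Since `α(g) ι(v) = ι(v) g`, the twisted commutator identity
`ι(v) x - α(x) ι(v) = B(v, ·) ⌋ x` shows that every contraction `d ⌋ g` vanishes, the bilinear
form being nondegenerate. Transported to the exterior algebra (contractions commute with the
linear isomorphism `C(V) ≃ ⋀ V`), this says that the number operator `∑ⱼ eⱼ ∧ (e*ⱼ ⌋ ·)`, which
acts on `⋀ⁱ V` as multiplication by `i`, kills `g`; in characteristic zero all components of
positive degree therefore vanish, and `g` is a scalar.
-/

open CliffordAlgebra

namespace CliffordAlgebra

variable {R M : Type*} [CommRing R] [AddCommGroup M] [Module R M]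

theorem ι_mul_sub_involute_mul_ι (Q : QuadraticForm R M) (v : M) (x : CliffordAlgebra Q) :
    ι Q v * x - involute x * ι Q v = contractLeft (Q.polarBilin v) x := by
  induction x using CliffordAlgebra.left_induction with
  | algebraMap r => simp [Algebra.commutes, contractLeft_algebraMap]
  | add x y hx hy =>
    rw [map_add, map_add, mul_add, add_mul, ← hx, ← hy]
    abel
  | ι_mul x m hx =>
    have hswap : ι Q v * ι Q m = algebraMap R _ (QuadraticMap.polar Q v m) - ι Q m * ι Q v :=
      eq_sub_of_add_eq (ι_mul_ι_add_swap v m)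
    rw [contractLeft_ι_mul, ← hx, map_mul, involute_ι, Algebra.smul_def,
      QuadraticMap.polarBilin_apply_apply, ← mul_assoc, hswap]
    noncomm_ring

end CliffordAlgebra

namespace ExteriorAlgebra

section numberOperator

variable {R M κ : Type*} [CommRing R] [AddCommGroup M] [Module R M] [Fintype κ]

noncomputable def numberOperator (b : Module.Basis κ R M) :
    ExteriorAlgebra R M →ₗ[R] ExteriorAlgebra R M :=
  ∑ j, LinearMap.mulLeft R (ι R (b j)) ∘ₗ contractLeft (b.coord j)

theorem numberOperator_apply (b : Module.Basis κ R M) (x : ExteriorAlgebra R M) :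
    numberOperator b x = ∑ j, ι R (b j) * contractLeft (b.coord j) x := by
  simp [numberOperator]

theorem numberOperator_of_mem (b : Module.Basis κ R M) {i : ℕ} {x : ExteriorAlgebra R M}
    (hx : x ∈ ⋀[R]^i M) : numberOperator b x = i • x := by
  induction hx using Submodule.pow_induction_on_left' with
  | algebraMap r => simp [numberOperator_apply, contractLeft_algebraMap]
  | add x y n _ _ ihx ihy => rw [map_add, ihx, ihy, smul_add]
  | mem_mul m hm n x _ ih =>
    obtain ⟨v, rfl⟩ := hm
    have hexpand : ∑ j, b.coord j v • ι R (b j) = ι R v := by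
      simp_rw [← map_smul, ← map_sum, Module.Basis.coord_apply, Module.Basis.sum_repr]
    have hanti : ∀ (a : M) (y : ExteriorAlgebra R M),
        ι R a * (ι R v * y) = -(ι R v * (ι R a * y)) := fun a y => by
      rw [← mul_assoc, ← mul_assoc, ← neg_mul, eq_neg_of_add_eq_zero_left (ι_add_mul_swap a v)]
    rw [numberOperator_apply] at ih ⊢
    calc ∑ j, ι R (b j) * contractLeft (b.coord j) (ι R v * x)
        = (∑ j, b.coord j v • ι R (b j)) * x
            + ι R v * ∑ j, ι R (b j) * contractLeft (b.coord j) x := by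
          simp_rw [contractLeft_ι_mul, mul_sub, mul_smul_comm, Finset.sum_sub_distrib,
            Finset.sum_mul, Finset.mul_sum, hanti, Finset.sum_neg_distrib, sub_neg_eq_add,
            smul_mul_assoc]
      _ = (n + 1) • (ι R v * x) := by
          rw [hexpand, ih, mul_smul_comm, succ_nsmul, add_comm]

theorem decompose_numberOperator (b : Module.Basis κ R M) (x : ExteriorAlgebra R M) (k : ℕ) :
    (DirectSum.decompose (fun i : ℕ ↦ ⋀[R]^i M) (numberOperator b x) k : ExteriorAlgebra R M)
      = k • (DirectSum.decompose (fun i : ℕ ↦ ⋀[R]^i M) x k : ExteriorAlgebra R M) := by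
  induction x using DirectSum.Decomposition.inductionOn (fun i : ℕ ↦ ⋀[R]^i M) with
  | zero => simp
  | @homogeneous i x =>
    obtain ⟨x, hx⟩ := x
    rw [numberOperator_of_mem b hx, ← Nat.cast_smul_eq_nsmul R, DirectSum.decompose_smul,
      DirectSum.smul_apply, Submodule.coe_smul, Nat.cast_smul_eq_nsmul]
    rcases eq_or_ne i k with rfl | hik
    · rfl
    · rw [DirectSum.decompose_of_mem_ne (fun i : ℕ ↦ ⋀[R]^i M) hx hik, smul_zero, smul_zero]
  | add x y hx hy =>
    simp only [map_add, DirectSum.decompose_add, DirectSum.add_apply, Submodule.coe_add, hx, hy,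
      smul_add]

end numberOperator

theorem exists_eq_algebraMap_of_contractLeft_eq_zero {F V : Type*} [Field F] [CharZero F]
    [AddCommGroup V] [Module F V] [FiniteDimensional F V] {x : ExteriorAlgebra F V}
    (hx : ∀ d : Module.Dual F V, contractLeft d x = 0) :
    ∃ r : F, x = algebraMap F (ExteriorAlgebra F V) r := by
  classical
  have hN : numberOperator (Module.finBasis F V) x = 0 := by
    simp [numberOperator_apply, hx]
  have hpos : ∀ k ≠ 0,
      (DirectSum.decompose (fun i : ℕ ↦ ⋀[F]^i V) x k : ExteriorAlgebra F V) = 0 := by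
    intro k hk
    have hk_smul := decompose_numberOperator (Module.finBasis F V) x k
    rw [hN, DirectSum.decompose_zero, DirectSum.zero_apply, ZeroMemClass.coe_zero, eq_comm,
      ← Nat.cast_smul_eq_nsmul F, smul_eq_zero, Nat.cast_eq_zero] at hk_smul
    exact hk_smul.resolve_left hk
  have hx0 : x ∈ ⋀[F]^0 V := by
    rw [← DirectSum.sum_support_decompose (fun i : ℕ ↦ ⋀[F]^i V) x]
    refine Submodule.sum_mem _ fun k _ => ?_
    rcases eq_or_ne k 0 with rfl | hk
    · exact SetLike.coe_mem _
    · rw [hpos k hk]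
      exact Submodule.zero_mem _
  rw [exteriorPower, pow_zero] at hx0
  obtain ⟨r, hr⟩ := Submodule.mem_one.mp hx0
  exact ⟨r, hr.symm⟩

end ExteriorAlgebra

theorem CliffordAlgebra.exists_eq_algebraMap_of_contractLeft_eq_zero {F V : Type*} [Field F]
    [CharZero F] [AddCommGroup V] [Module F V] [FiniteDimensional F V]
    {Q : QuadraticForm F V} {x : CliffordAlgebra Q}
    (hx : ∀ d : Module.Dual F V, contractLeft d x = 0) :
    ∃ r : F, x = algebraMap F (CliffordAlgebra Q) r := by
  have : Invertible (2 : F) := invertibleOfNonzero two_ne_zero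
  obtain ⟨r, hr⟩ :=
    ExteriorAlgebra.exists_eq_algebraMap_of_contractLeft_eq_zero (x := equivExterior Q x)
      fun d => by rw [equivExterior, changeFormEquiv_apply, ← changeForm_contractLeft, hx,
        map_zero]
  refine ⟨r, (equivExterior Q).injective ?_⟩
  rw [hr, equivExterior, changeFormEquiv_apply, changeForm_algebraMap]

/-- Let `F` be a field of characteristic zero, `V` a finite-dimensional `F`-vector space, and
`Q` a nondegenerate quadratic form on `V`. If `g` is a unit of the Clifford algebra `C(V)`
satisfying `α(g)·ι(v)·g⁻¹ = ι(v)` for all `v ∈ V`, then `g` is a nonzero scalar: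
there exists `λ ∈ F`, `λ ≠ 0`, with `g = λ·1` in `C(V)`.  (The kernel of the canonical
projection `P : GPin(V) → O(V)` is `GL(1) = Fˣ`.) -/
theorem kernel_of_projection_is_scalars
    {F V : Type*} [Field F] [CharZero F] [AddCommGroup V] [Module F V]
    [FiniteDimensional F V] (Q : QuadraticForm F V) (hQ : Q.polarBilin.Nondegenerate)
    (g : (CliffordAlgebra Q)ˣ)
    (hg : ∀ v : V, involute (g : CliffordAlgebra Q) * ι Q v *
        ((g⁻¹ : (CliffordAlgebra Q)ˣ) : CliffordAlgebra Q) = ι Q v) :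
    ∃ l : F, l ≠ 0 ∧ (g : CliffordAlgebra Q) = algebraMap F (CliffordAlgebra Q) l := by
  have hcomm : ∀ v, involute (g : CliffordAlgebra Q) * ι Q v = ι Q v * g := fun v => by
    simpa [mul_assoc] using congrArg (· * (g : CliffordAlgebra Q)) (hg v)
  have hcontract : ∀ d : Module.Dual F V, contractLeft d (g : CliffordAlgebra Q) = 0 := by
    intro d
    obtain ⟨v, rfl⟩ : ∃ v, Q.polarBilin v = d :=
      ⟨(LinearMap.BilinForm.toDual Q.polarBilin hQ).symm d, LinearMap.ext fun w =>
        LinearMap.BilinForm.apply_toDual_symm_apply d w⟩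
    rw [← ι_mul_sub_involute_mul_ι, hcomm, sub_self]
  obtain ⟨r, hr⟩ := exists_eq_algebraMap_of_contractLeft_eq_zero hcontract
  refine ⟨r, ?_, hr⟩
  rintro rfl
  exact g.ne_zero (by rw [hr, map_zero])
end

section
/- Let F be a field of characteristic zero, V a finite-dimensional F-vector space, and Q a nondegenerate quadratic form on V. Let g be a unit of C(V) with α(g)·ι(V)·g⁻¹ = ι(V) (i.e. g ∈ GPin(V)). Then for every v ∈ V there is a unique w ∈ V with α(g)·ι(v)·g⁻¹ = ι(w), and this w satisfies Q(w) = Q(v). In other words, the induced map P(g) : V → V is a well-defined linear automorphism of V preserving Q, so P(g) ∈ O(V). -/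
open CliffordAlgebra

/-- Let `F` be a field of characteristic zero, `V` a finite-dimensional `F`-vector space, and
`Q` a nondegenerate quadratic form on `V`. Let `g` be a unit of `C(V)` with
`α(g)·ι(V)·g⁻¹ = ι(V)` (i.e. `g ∈ GPin(V)`). Then for every `v ∈ V` there is a unique
`w ∈ V` with `α(g)·ι(v)·g⁻¹ = ι(w)`, and this `w` satisfies `Q w = Q v`.  Moreover the
induced map `P(g) : V → V` is a well-defined linear automorphism of `V` preserving `Q`,
i.e. `P(g) ∈ O(V)`. -/
theorem projection_lands_in_orthogonal_group
    {F V : Type*} [Field F] [CharZero F] [AddCommGroup V] [Module F V]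
    [FiniteDimensional F V] (Q : QuadraticForm F V) (hQ : Q.polarBilin.Nondegenerate)
    (g : (CliffordAlgebra Q)ˣ)
    (hg : (fun x => involute (g : CliffordAlgebra Q) * x *
        ((g⁻¹ : (CliffordAlgebra Q)ˣ) : CliffordAlgebra Q)) '' Set.range (ι Q) =
        Set.range (ι Q)) :
    (∀ v : V, ∃! w : V, involute (g : CliffordAlgebra Q) * ι Q v *
        ((g⁻¹ : (CliffordAlgebra Q)ˣ) : CliffordAlgebra Q) = ι Q w) ∧
    (∀ v w : V, involute (g : CliffordAlgebra Q) * ι Q v *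
        ((g⁻¹ : (CliffordAlgebra Q)ˣ) : CliffordAlgebra Q) = ι Q w → Q w = Q v) ∧
    (∃ f : V ≃ₗ[F] V, (∀ v : V, involute (g : CliffordAlgebra Q) * ι Q v *
        ((g⁻¹ : (CliffordAlgebra Q)ˣ) : CliffordAlgebra Q) = ι Q (f v)) ∧
      ∀ v : V, Q (f v) = Q v) := by
  letI : Invertible (2 : F) := invertibleOfNonzero two_ne_zero
  -- injectivity of ι
  have hι : Function.Injective (ι Q) := by
    intro a b h
    have h2 := congrArg (equivExterior Q) h
    simp only [equivExterior, changeFormEquiv_apply, changeForm_ι] at h2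
    exact (ExteriorAlgebra.ι_inj F a b).mp h2
  -- existence of w
  have hex : ∀ v : V, ∃ w : V, involute (g : CliffordAlgebra Q) * ι Q v *
      ((g⁻¹ : (CliffordAlgebra Q)ˣ) : CliffordAlgebra Q) = ι Q w := by
    intro v
    have hmem : involute (g : CliffordAlgebra Q) * ι Q v *
        ((g⁻¹ : (CliffordAlgebra Q)ˣ) : CliffordAlgebra Q) ∈ Set.range (ι Q) := by
      rw [← hg]
      exact Set.mem_image_of_mem _ ⟨v, rfl⟩
    obtain ⟨w, hw⟩ := hmem
    exact ⟨w, hw.symm⟩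
  -- Q preservation
  have hQpres : ∀ v w : V, involute (g : CliffordAlgebra Q) * ι Q v *
      ((g⁻¹ : (CliffordAlgebra Q)ˣ) : CliffordAlgebra Q) = ι Q w → Q w = Q v := by
    intro v w h
    have h2 : (g : CliffordAlgebra Q) * ι Q v *
        involute ((g⁻¹ : (CliffordAlgebra Q)ˣ) : CliffordAlgebra Q) = ι Q w := by
      have := congrArg involute h
      simp only [map_mul, involute_ι, involute_involute, mul_neg, neg_mul, neg_inj] at this
      exact this
    have key : algebraMap F (CliffordAlgebra Q) (Q w) = algebraMap F (CliffordAlgebra Q) (Q v) := by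
      calc algebraMap F (CliffordAlgebra Q) (Q w) = ι Q w * ι Q w := (ι_sq_scalar Q w).symm
      _ = (involute (g : CliffordAlgebra Q) * ι Q v *
            ((g⁻¹ : (CliffordAlgebra Q)ˣ) : CliffordAlgebra Q)) *
          ((g : CliffordAlgebra Q) * ι Q v *
            involute ((g⁻¹ : (CliffordAlgebra Q)ˣ) : CliffordAlgebra Q)) := by rw [h, h2]
      _ = involute (g : CliffordAlgebra Q) * (ι Q v * ι Q v) *
            involute ((g⁻¹ : (CliffordAlgebra Q)ˣ) : CliffordAlgebra Q) := by
          have e2 : ((g⁻¹ : (CliffordAlgebra Q)ˣ) : CliffordAlgebra Q) * (g : CliffordAlgebra Q) = 1 :=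
            Units.inv_mul g
          simp only [mul_assoc]
          rw [← mul_assoc ((g⁻¹ : (CliffordAlgebra Q)ˣ) : CliffordAlgebra Q) (g : CliffordAlgebra Q), e2, one_mul]
      _ = algebraMap F (CliffordAlgebra Q) (Q v) := by
          rw [ι_sq_scalar, ← Algebra.commutes (Q v) (involute (g : CliffordAlgebra Q)),
            mul_assoc, ← map_mul, Units.mul_inv, map_one, mul_one]
    exact (algebraMap F (CliffordAlgebra Q)).injective key
  -- the linear map
  let L : V →ₗ[F] CliffordAlgebra Q :=
    (LinearMap.mulLeft F (involute (g : CliffordAlgebra Q))).comp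
      ((LinearMap.mulRight F ((g⁻¹ : (CliffordAlgebra Q)ˣ) : CliffordAlgebra Q)).comp (ι Q))
  have hL : ∀ v : V, L v = involute (g : CliffordAlgebra Q) * ι Q v *
      ((g⁻¹ : (CliffordAlgebra Q)ˣ) : CliffordAlgebra Q) := by
    intro v
    simp [L, LinearMap.mulLeft_apply, LinearMap.mulRight_apply, mul_assoc]
  have hmem : ∀ v : V, L v ∈ LinearMap.range (ι Q) := by
    intro v
    obtain ⟨w, hw⟩ := hex v
    exact ⟨w, by rw [hL]; exact hw.symm⟩
  let f₀ : V →ₗ[F] V :=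
    ((LinearEquiv.ofInjective (ι Q) hι).symm.toLinearMap).comp (L.codRestrict _ hmem)
  have hf₀ : ∀ v : V, ι Q (f₀ v) = L v := by
    intro v
    have := (LinearEquiv.ofInjective (ι Q) hι).apply_symm_apply (L.codRestrict _ hmem v)
    have h2 := congrArg (Subtype.val) this
    simpa [LinearEquiv.ofInjective_apply, f₀] using h2
  have hrec : ∀ x : V, involute ((g⁻¹ : (CliffordAlgebra Q)ˣ) : CliffordAlgebra Q) * L x *
      (g : CliffordAlgebra Q) = ι Q x := by
    intro x
    have e1 : involute ((g⁻¹ : (CliffordAlgebra Q)ˣ) : CliffordAlgebra Q) *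
        involute (g : CliffordAlgebra Q) = 1 := by
      rw [← map_mul, Units.inv_mul, map_one]
    have e2 : ((g⁻¹ : (CliffordAlgebra Q)ˣ) : CliffordAlgebra Q) * (g : CliffordAlgebra Q) = 1 :=
      Units.inv_mul g
    rw [hL]
    simp only [← mul_assoc]
    rw [e1, one_mul, mul_assoc, e2, mul_one]
  have hinj : Function.Injective f₀ := by
    intro a b h
    apply hι
    have hLab : L a = L b := by rw [← hf₀, ← hf₀, h]
    rw [← hrec a, ← hrec b, hLab]
  have hsurj : Function.Surjective f₀ := by
    intro w
    have : ι Q w ∈ (fun x => involute (g : CliffordAlgebra Q) * x *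
        ((g⁻¹ : (CliffordAlgebra Q)ˣ) : CliffordAlgebra Q)) '' Set.range (ι Q) := by
      rw [hg]; exact ⟨w, rfl⟩
    obtain ⟨x, ⟨v, rfl⟩, hx⟩ := this
    refine ⟨v, hι ?_⟩
    rw [hf₀, hL]
    exact hx
  refine ⟨?_, hQpres, ?_⟩
  · intro v
    obtain ⟨w, hw⟩ := hex v
    exact ⟨w, hw, fun y hy => hι (hy.symm.trans hw)⟩
  · refine ⟨LinearEquiv.ofBijective f₀ ⟨hinj, hsurj⟩, fun v => ?_, fun v => ?_⟩
    · exact (hL v).symm.trans (hf₀ v).symm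
    · exact hQpres v (f₀ v) ((hL v).symm.trans (hf₀ v).symm)
end
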